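/- arXiv:0712.1331 — 2 statements merged into one kernel-verified Lean document; each statement's English description precedes it below -/
import Mathlib

section
/- For all s > 1 and all real t: |t|^s ≤ |t|^{s-1} t · φ(t)/φ(1) + 1, where φ is the odd function defined for t ≥ 0 by φ(t) = ∫_0^t (1+σ)^{-(m+1)} dσ, with m > 0. -/
open Real intervalIntegral Set

/-!
For `|t| ≤ 1` the left side is at most `1`, and the first term on the right is nonnegative because
`t φ(t) = |t| φ(|t|) ≥ 0` by oddness. For `|t| ≥ 1` monotonicity gives `φ(|t|) ≥ φ(1)`, so the
first term on the right alone is already at least `|t|^{s-1} |t| = |t|^s`.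
-/

lemma intervalIntegrable_one_add_rpow (r : ℝ) {a b : ℝ} (ha : 0 ≤ a) (hab : a ≤ b) :
    IntervalIntegrable (fun σ : ℝ => (1 + σ) ^ r) MeasureTheory.volume a b := by
  refine ContinuousOn.intervalIntegrable fun σ hσ => ?_
  rw [uIcc_of_le hab] at hσ
  have h1σ : 1 + σ ≠ 0 := by linarith [hσ.1]
  exact ((continuousAt_const.add continuousAt_id).rpow_const (Or.inl h1σ)).continuousWithinAt

lemma monotoneOn_integral_one_add_rpow (r : ℝ) :
    MonotoneOn (fun t => ∫ σ in (0 : ℝ)..t, (1 + σ) ^ r) (Ici 0) := by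
  intro a ha b _ hab
  refine integral_mono_interval le_rfl ha hab ?_
    (intervalIntegrable_one_add_rpow r le_rfl (ha.trans hab))
  filter_upwards [MeasureTheory.ae_restrict_mem measurableSet_Ioc] with σ hσ
  exact rpow_nonneg (by linarith [hσ.1]) r

lemma integral_one_add_rpow_pos (r : ℝ) {t : ℝ} (ht : 0 < t) :
    0 < ∫ σ in (0 : ℝ)..t, (1 + σ) ^ r :=
  intervalIntegral_pos_of_pos_on (intervalIntegrable_one_add_rpow r le_rfl ht.le)
    (fun σ hσ => rpow_pos_of_pos (by linarith [hσ.1]) r) ht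

lemma mul_apply_eq_abs_mul_apply_abs {φ : ℝ → ℝ} (hodd : ∀ t, φ (-t) = -φ t) (t : ℝ) :
    t * φ t = |t| * φ |t| := by
  rcases le_or_gt 0 t with ht | ht
  · rw [abs_of_nonneg ht]
  · rw [abs_of_neg ht, hodd, neg_mul_neg]

lemma rpow_le_rpow_sub_one_mul_mul_div_add_one {g : ℝ → ℝ} (hg : MonotoneOn g (Ici 0))
    (hg0 : 0 ≤ g 0) (hg1 : 0 < g 1) {s x : ℝ} (hs : 0 ≤ s) (hx : 0 ≤ x) :
    x ^ s ≤ x ^ (s - 1) * (x * g x) / g 1 + 1 := by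
  rcases le_or_gt x 1 with hx1 | hx1
  · have hgx : 0 ≤ g x := hg0.trans (hg self_mem_Ici hx hx)
    have : 0 ≤ x ^ (s - 1) * (x * g x) / g 1 := by positivity
    linarith [rpow_le_one hx hx1 hs]
  · have hgx : g 1 ≤ g x := hg (mem_Ici.2 zero_le_one) hx hx1.le
    have hpow : x ^ (s - 1) * x = x ^ s := by
      rw [← rpow_add_one (by positivity)]; norm_num
    have : x ^ s ≤ x ^ (s - 1) * (x * g x) / g 1 := by
      rw [le_div_iff₀ hg1, ← mul_assoc, hpow]
      exact mul_le_mul_of_nonneg_left hgx (by positivity)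
    linarith

theorem stmt1_general (s m : ℝ) (hs : 1 < s) (φ : ℝ → ℝ)
    (hφ : ∀ t : ℝ, 0 ≤ t → φ t = ∫ σ in (0:ℝ)..t, (1 + σ) ^ (-(m + 1)))
    (hodd : ∀ t : ℝ, φ (-t) = -φ t) :
    ∀ t : ℝ, |t| ^ s ≤ |t| ^ (s - 1) * t * φ t / φ 1 + 1 := by
  intro t
  have hmono : MonotoneOn φ (Ici 0) := fun a ha b hb hab => by
    rw [hφ a ha, hφ b hb]
    exact monotoneOn_integral_one_add_rpow _ ha hb hab
  have hφ0 : φ 0 = 0 := by rw [hφ 0 le_rfl, integral_same]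
  have hφ1 : 0 < φ 1 := by rw [hφ 1 zero_le_one]; exact integral_one_add_rpow_pos _ one_pos
  rw [mul_assoc, mul_apply_eq_abs_mul_apply_abs hodd]
  exact rpow_le_rpow_sub_one_mul_mul_div_add_one hmono hφ0.ge hφ1 (by linarith) (abs_nonneg t)

/-- For all `s > 1`, `m > 0`, and all real `t`:
`|t|^s ≤ |t|^{s-1} t · φ(t)/φ(1) + 1`, where `φ` is the odd function with
`φ(t) = ∫_0^t (1+σ)^{-(m+1)} dσ` for `t ≥ 0`. -/
theorem stmt1 (s m : ℝ) (hs : 1 < s) (hm : 0 < m) (φ : ℝ → ℝ)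
    (hφ : ∀ t : ℝ, 0 ≤ t → φ t = ∫ σ in (0:ℝ)..t, (1 + σ) ^ (-(m + 1)))
    (hodd : ∀ t : ℝ, φ (-t) = -φ t) :
    ∀ t : ℝ, |t| ^ s ≤ |t| ^ (s - 1) * t * φ t / φ 1 + 1 :=
  stmt1_general s m hs φ hφ hodd
end

section
/- Let u, v be continuous on an open set Ω ⊂ ℝ^N and suppose u − v is a viscosity subsolution of −M⁺(D²(u−v)) + G ≤ f in Ω, where G(x) = F(u(x)) − F(v(x)) with F increasing and continuous, and f continuous. Then (u−v)⁺ = max{u−v, 0} is a viscosity subsolution of −M⁺(D²(u−v)⁺) + G⁺ ≤ f⁺ in Ω. -/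
/-!
Where `u ≥ v`, the function `(u - v)⁺` touches `u - v` from above, so a test function
touching `(u - v)⁺` from above touches `u - v` as well, and there `G⁺ = G`. Where `u < v`,
the function `(u - v)⁺ ≥ 0` vanishes at the point, so the test function has a local minimum
there: its Hessian has nonnegative trace, hence `M⁺(D²φ) ≥ λ tr D²φ ≥ 0`, while
`G⁺ = 0 ≤ f⁺` since `F` is monotone.
-/

/-- Pucci maximal operator of a matrix via the sup representation
`M⁺(M) = sup { tr(A M) : A symmetric, λI ≤ A ≤ ΛI }`. -/
noncomputable def pucciSup {N : ℕ} (lam Lam : ℝ) (M : Matrix (Fin N) (Fin N) ℝ) : ℝ :=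
  sSup { t | ∃ A : Matrix (Fin N) (Fin N) ℝ, A.IsHermitian ∧
    (A - lam • 1).PosSemidef ∧ (Lam • 1 - A).PosSemidef ∧ t = (A * M).trace }

/-- The Hessian matrix of `φ : ℝ^N → ℝ` at `x`. -/
noncomputable def hessMat {N : ℕ} (φ : EuclideanSpace ℝ (Fin N) → ℝ)
    (x : EuclideanSpace ℝ (Fin N)) : Matrix (Fin N) (Fin N) ℝ :=
  Matrix.of fun i j =>
    fderiv ℝ (fun y => fderiv ℝ φ y (EuclideanSpace.single j 1)) x (EuclideanSpace.single i 1)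

/-- `w` is a viscosity subsolution of `−M⁺_{λ,Λ}(D²w) + g ≤ h` in `Ω`: for every C²
test function `φ` and every `x ∈ Ω` at which `w − φ` has a local maximum on `Ω`,
`−M⁺(D²φ(x)) + g(x) ≤ h(x)`. -/
def IsViscSubsol {N : ℕ} (lam Lam : ℝ) (Ω : Set (EuclideanSpace ℝ (Fin N)))
    (w g h : EuclideanSpace ℝ (Fin N) → ℝ) : Prop :=
  ∀ φ : EuclideanSpace ℝ (Fin N) → ℝ, ContDiff ℝ 2 φ →
    ∀ x ∈ Ω, IsLocalMaxOn (fun y => w y - φ y) Ω x →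
      -pucciSup lam Lam (hessMat φ x) + g x ≤ h x

open Topology

lemma deriv_deriv_nonneg_of_isLocalMin {g : ℝ → ℝ} {t : ℝ} (hmin : IsLocalMin g t)
    (hc : ContinuousAt g t) : 0 ≤ deriv (deriv g) t := by
  by_contra! hneg
  -- `g'' t < 0` would make `t` a local maximum too, so `g` would be locally constant.
  have hmax : IsLocalMax g t := isLocalMax_of_deriv_deriv_neg hneg hmin.deriv_eq_zero hc
  have hconst : g =ᶠ[𝓝 t] fun _ => g t := by
    filter_upwards [hmin, hmax] with y hy₁ hy₂ using le_antisymm hy₂ hy₁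
  have hderiv : deriv g =ᶠ[𝓝 t] fun _ => 0 := by simpa using hconst.deriv
  simp [hderiv.deriv_eq] at hneg

section LineRestriction

variable {E F : Type*} [NormedAddCommGroup E] [NormedSpace ℝ E]
  [NormedAddCommGroup F] [NormedSpace ℝ F]

lemma HasFDerivAt.hasDerivAt_comp_add_smul {f : E → F} {f' : E →L[ℝ] F} {x e : E} {t : ℝ}
    (hf : HasFDerivAt f f' (x + t • e)) : HasDerivAt (fun s : ℝ => f (x + s • e)) (f' e) t := by
  have hline : HasDerivAt (fun s : ℝ => x + s • e) e t := by
    simpa using ((hasDerivAt_id t).smul_const e).const_add x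
  exact hf.comp_hasDerivAt t hline

lemma fderiv_fderiv_apply_nonneg_of_isLocalMin {φ : E → ℝ} (hφ : ContDiff ℝ 2 φ) {x : E}
    (hmin : IsLocalMin φ x) (e : E) : 0 ≤ fderiv ℝ (fun y => fderiv ℝ φ y e) x e := by
  set g : ℝ → ℝ := fun t => φ (x + t • e)
  have hline : Continuous fun t : ℝ => x + t • e := by fun_prop
  have hderiv : deriv g = fun t => fderiv ℝ φ (x + t • e) e := funext fun t =>
    ((hφ.differentiable two_ne_zero _).hasFDerivAt.hasDerivAt_comp_add_smul).deriv
  have hψ : DifferentiableAt ℝ (fun y => fderiv ℝ φ y e) x :=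
    ((hφ.fderiv_right (m := 1) le_rfl).differentiable one_ne_zero x).clm_apply
      (differentiableAt_const e)
  have hsecond : deriv (deriv g) 0 = fderiv ℝ (fun y => fderiv ℝ φ y e) x e := by
    rw [hderiv]
    have hψ₀ : HasFDerivAt (fun y => fderiv ℝ φ y e) (fderiv ℝ (fun y => fderiv ℝ φ y e) x)
        (x + (0 : ℝ) • e) := by simpa using hψ.hasFDerivAt
    exact hψ₀.hasDerivAt_comp_add_smul.deriv
  have hgmin : IsLocalMin g 0 := by
    have hmin₀ : IsLocalMin φ (x + (0 : ℝ) • e) := by simpa using hmin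
    exact IsLocalMin.comp_continuous (g := fun t : ℝ => x + t • e) hmin₀ hline.continuousAt
  rw [← hsecond]
  exact deriv_deriv_nonneg_of_isLocalMin hgmin (hφ.continuous.comp hline).continuousAt

end LineRestriction

lemma trace_hessMat_nonneg_of_isLocalMin {N : ℕ} {φ : EuclideanSpace ℝ (Fin N) → ℝ}
    (hφ : ContDiff ℝ 2 φ) {x : EuclideanSpace ℝ (Fin N)} (hmin : IsLocalMin φ x) :
    0 ≤ (hessMat φ x).trace :=
  Finset.sum_nonneg fun _ _ => fderiv_fderiv_apply_nonneg_of_isLocalMin hφ hmin _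

lemma pucciSup_nonneg_of_trace_nonneg {N : ℕ} {lam Lam : ℝ} (hlam : 0 ≤ lam) (hlL : lam ≤ Lam)
    {M : Matrix (Fin N) (Fin N) ℝ} (hM : 0 ≤ M.trace) : 0 ≤ pucciSup lam Lam M := by
  unfold pucciSup
  set S := { t | ∃ A : Matrix (Fin N) (Fin N) ℝ, A.IsHermitian ∧
    (A - lam • 1).PosSemidef ∧ (Lam • 1 - A).PosSemidef ∧ t = (A * M).trace }
  by_cases hbdd : BddAbove S
  · have hmem : lam * M.trace ∈ S := by
      refine ⟨lam • 1, by simp [Matrix.IsHermitian], by simpa using Matrix.PosSemidef.zero, ?_,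
        by simp [Matrix.trace_smul]⟩
      rw [← sub_smul, Matrix.smul_one_eq_diagonal]
      exact Matrix.posSemidef_diagonal_iff.mpr fun _ => sub_nonneg.mpr hlL
    exact (mul_nonneg hlam hM).trans (le_csSup hbdd hmem)
  · rw [Real.sSup_of_not_bddAbove hbdd]

section PositivePart

variable {α : Type*} [TopologicalSpace α] {w φ : α → ℝ} {s : Set α} {x : α}

lemma isLocalMaxOn_of_max_zero_sub (h : IsLocalMaxOn (fun y => max (w y) 0 - φ y) s x)
    (hx : 0 ≤ w x) : IsLocalMaxOn (fun y => w y - φ y) s x := by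
  filter_upwards [h] with y hy
  simp only [max_eq_left hx] at hy
  linarith [le_max_left (w y) 0]

lemma isLocalMinOn_of_max_zero_sub
    (h : IsLocalMaxOn (fun y => max (w y) 0 - φ y) s x) (hx : w x ≤ 0) : IsLocalMinOn φ s x := by
  filter_upwards [h] with y hy
  simp only [max_eq_right hx] at hy
  linarith [le_max_right (w y) 0]

end PositivePart

theorem IsViscSubsol.max_zero {N : ℕ} {lam Lam : ℝ} {Ω : Set (EuclideanSpace ℝ (Fin N))}
    {w g h : EuclideanSpace ℝ (Fin N) → ℝ} (hlam : 0 ≤ lam) (hlL : lam ≤ Lam) (hΩ : IsOpen Ω)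
    (hsub : IsViscSubsol lam Lam Ω w g h) (hpos : ∀ x ∈ Ω, 0 ≤ w x → 0 ≤ g x)
    (hneg : ∀ x ∈ Ω, w x ≤ 0 → g x ≤ 0) :
    IsViscSubsol lam Lam Ω (fun x => max (w x) 0) (fun x => max (g x) 0)
      (fun x => max (h x) 0) := by
  intro φ hφ x hx hmax
  rcases le_total 0 (w x) with hw | hw
  · have hsub_x := hsub φ hφ x hx (isLocalMaxOn_of_max_zero_sub hmax hw)
    simp only [max_eq_left (hpos x hx hw)]
    exact hsub_x.trans (le_max_left _ _)
  · have hmin : IsLocalMin φ x :=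
      (isLocalMinOn_of_max_zero_sub hmax hw).isLocalMin (hΩ.mem_nhds hx)
    have hP : 0 ≤ pucciSup lam Lam (hessMat φ x) :=
      pucciSup_nonneg_of_trace_nonneg hlam hlL (trace_hessMat_nonneg_of_isLocalMin hφ hmin)
    simp only [max_eq_right (hneg x hx hw)]
    linarith [le_max_right (h x) 0]

theorem stmt14_general {N : ℕ} (lam Lam : ℝ) (hlam : 0 < lam) (hlL : lam ≤ Lam)
    (Ω : Set (EuclideanSpace ℝ (Fin N))) (hΩ : IsOpen Ω)
    (u v f : EuclideanSpace ℝ (Fin N) → ℝ)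
    (F : ℝ → ℝ) (hFmono : StrictMono F)
    (G : EuclideanSpace ℝ (Fin N) → ℝ) (hG : ∀ x, G x = F (u x) - F (v x))
    (hsub : IsViscSubsol lam Lam Ω (fun x => u x - v x) G f) :
    IsViscSubsol lam Lam Ω (fun x => max (u x - v x) 0)
      (fun x => max (G x) 0) (fun x => max (f x) 0) := by
  refine hsub.max_zero hlam.le hlL hΩ (fun x _ hx => ?_) (fun x _ hx => ?_) <;> rw [hG]
  · exact sub_nonneg.2 (hFmono.monotone (sub_nonneg.1 hx))
  · exact sub_nonpos.2 (hFmono.monotone (sub_nonpos.1 hx))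

/-- Kato-type lemma: if `u − v` is a viscosity subsolution of
`−M⁺(D²(u−v)) + G ≤ f` with `G = F(u) − F(v)`, `F` increasing and continuous,
then `(u−v)⁺` is a viscosity subsolution of `−M⁺(D²(u−v)⁺) + G⁺ ≤ f⁺`. -/
theorem stmt14 {N : ℕ} (lam Lam : ℝ) (hlam : 0 < lam) (hlL : lam ≤ Lam)
    (Ω : Set (EuclideanSpace ℝ (Fin N))) (hΩ : IsOpen Ω)
    (u v f : EuclideanSpace ℝ (Fin N) → ℝ)
    (hu : ContinuousOn u Ω) (hv : ContinuousOn v Ω) (hf : ContinuousOn f Ω)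
    (F : ℝ → ℝ) (hFmono : StrictMono F) (hFcont : Continuous F)
    (G : EuclideanSpace ℝ (Fin N) → ℝ) (hG : ∀ x, G x = F (u x) - F (v x))
    (hsub : IsViscSubsol lam Lam Ω (fun x => u x - v x) G f) :
    IsViscSubsol lam Lam Ω (fun x => max (u x - v x) 0)
      (fun x => max (G x) 0) (fun x => max (f x) 0) :=
  stmt14_general lam Lam hlam hlL Ω hΩ u v f F hFmono G hG hsub
end
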